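/- Let S = (I, M, O) be a correlation scenario and let M', M'' be collections of subsets of inputs with M''_i ⊆ M'_i ⊆ M_i for all i ∈ I. Then Ext(PD(S, M')) ⊆ Ext(PD(S, M'')). -/

import Mathlib

open scoped Classical
open MeasureTheory

noncomputable section

/-- A correlation scenario `S = (I, M, O)`: a finite set `I` of parties, for each party `i`
a finite nonempty set `M i` of inputs, and for each input `x : M i` a finite set `O i x`
of outputs with at least two elements. -/
structure Scenario where
  I : Type
  M : I → Type
  O : (i : I) → M i → Type
  fI : Fintype I
  fM : ∀ i, Fintype (M i)
  fO : ∀ i x, Fintype (O i x)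
  hM : ∀ i, Nonempty (M i)
  hO : ∀ i x, 2 ≤ Fintype.card (O i x)

attribute [instance] Scenario.fI Scenario.fM Scenario.fO Scenario.hM

instance Scenario.instNonemptyO (S : Scenario) (i : S.I) (x : S.M i) : Nonempty (S.O i x) :=
  Fintype.card_pos_iff.mp (by have := S.hO i x; omega)

/-- Input strings of a scenario. -/
abbrev InputString (S : Scenario) := ∀ i, S.M i

/-- Output strings for a given input string. -/
abbrev OutputString (S : Scenario) (x : InputString S) := ∀ i, S.O i (x i)

/-- The ambient real vector space with one coordinate `℘(a|x)` for each pair of an input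
string `x` and an output string `a`. -/
abbrev Behaviour (S : Scenario) := (x : InputString S) → OutputString S x → ℝ

/-- `p` is a behaviour: each `p x` is a probability distribution on output strings. -/
def IsBehaviour (S : Scenario) (p : Behaviour S) : Prop :=
  (∀ x a, 0 ≤ p x a) ∧ ∀ x, ∑ a, p x a = 1

/-- The marginal `℘(a_V | x)` of a behaviour on the set `V` of parties, evaluated at the
restriction of `a` to `V`. -/
def marg (S : Scenario) (p : Behaviour S) (x : InputString S) (V : Set S.I)
    (a : OutputString S x) : ℝ :=
  ∑ b : OutputString S x, if ∀ i ∈ V, b i = a i then p x b else 0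

/-- No-signalling: replacing the input of party `i` (all other inputs fixed) leaves the
marginal on `I ∖ {i}` unchanged. -/
def NoSignalling (S : Scenario) (p : Behaviour S) : Prop :=
  ∀ (i : S.I) (x : InputString S) (m : S.M i)
    (a : OutputString S x) (a' : OutputString S (Function.update x i m)),
    (∀ j, j ≠ i → HEq (a j) (a' j)) →
    marg S p x {i}ᶜ a = marg S p (Function.update x i m) {i}ᶜ a'

/-- The set `NS(S)` of no-signalling behaviours. -/
def NSset (S : Scenario) : Set (Behaviour S) :=
  {p | IsBehaviour S p ∧ NoSignalling S p}

/-- A behaviour is predictable if all its probabilities are `0` or `1`. -/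
def Predictable (S : Scenario) (p : Behaviour S) : Prop :=
  ∀ x a, p x a = 0 ∨ p x a = 1

/-- The set `P_NS(S)` of predictable no-signalling behaviours. -/
def PNS (S : Scenario) : Set (Behaviour S) :=
  {p | IsBehaviour S p ∧ NoSignalling S p ∧ Predictable S p}

/-- The Bell-local polytope `B(S) = conv(P_NS(S))`. -/
def BellSet (S : Scenario) : Set (Behaviour S) :=
  convexHull ℝ (PNS S)

/-- `F_x = {i : x i ∈ M' i}`, the context-dependent set of parties choosing an input in the
distinguished collection `M'`. -/
def Fup (S : Scenario) (M' : ∀ i, Set (S.M i)) (x : InputString S) : Set S.I :=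
  {i | x i ∈ M' i}

/-- Partial predictability w.r.t. the collection `M'`: every marginal on a subset of `F_x`
is `{0,1}`-valued. -/
def PartPredictable (S : Scenario) (M' : ∀ i, Set (S.M i)) (p : Behaviour S) : Prop :=
  ∀ (x : InputString S) (V : Set S.I), V ⊆ Fup S M' x →
    ∀ a, marg S p x V a = 0 ∨ marg S p x V a = 1

/-- The set `PP(S, M')` of behaviours partially predictable w.r.t. `M'`. -/
def PPset (S : Scenario) (M' : ∀ i, Set (S.M i)) : Set (Behaviour S) :=
  {p | IsBehaviour S p ∧ PartPredictable S M' p}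

/-- The set `PP_NS(S, M')` of partially predictable no-signalling behaviours. -/
def PPNS (S : Scenario) (M' : ∀ i, Set (S.M i)) : Set (Behaviour S) :=
  {p | IsBehaviour S p ∧ NoSignalling S p ∧ PartPredictable S M' p}

/-- The partially deterministic polytope `PD(S, M') = conv(PP_NS(S, M'))`. -/
def PD (S : Scenario) (M' : ∀ i, Set (S.M i)) : Set (Behaviour S) :=
  convexHull ℝ (PPNS S M')

/-- The restricted scenario `S_{|M'}`: parties `{i : M' i ≠ ∅}`, input sets `M' i`, same
output sets. -/
def Scenario.restrict (S : Scenario) (M' : ∀ i, Set (S.M i)) : Scenario where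
  I := {i : S.I // (M' i).Nonempty}
  M := fun i => ↥(M' i.1)
  O := fun i x => S.O i.1 x.1
  fI := Subtype.fintype _
  fM := fun i => (Set.toFinite (M' i.1)).fintype
  fO := fun i x => S.fO i.1 x.1
  hM := fun i => i.2.to_subtype
  hO := fun i x => S.hO i.1 x.1

/-- A bipartition `(S_{|M'}, S_{|M'^⊥})` is nonredundant unless `M'` is everything or nothing. -/
def Nonredundant (S : Scenario) (M' : ∀ i, Set (S.M i)) : Prop :=
  ¬ (∀ i, M' i = Set.univ) ∧ ¬ (∀ i, M' i = (∅ : Set (S.M i)))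

/-- Extension of an input string of `S` to an input string of the restricted scenario
`S_{|M'}` (choosing arbitrary inputs for the parties `i` with `x i ∉ M' i`). -/
def extendInput (S : Scenario) (M' : ∀ i, Set (S.M i)) (x : InputString S) :
    InputString (S.restrict M') :=
  fun i => if h : x i.1 ∈ M' i.1 then ⟨x i.1, h⟩ else ⟨i.2.some, i.2.some_mem⟩

/-- Extension of an output string of `S` to an output string of the restricted scenario
`S_{|M'}` at the extended input string. -/
def extendOutput (S : Scenario) (M' : ∀ i, Set (S.M i)) (x : InputString S)
    (a : OutputString S x) : OutputString (S.restrict M') (extendInput S M' x) :=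
  fun i =>
    if h : x i.1 ∈ M' i.1 then
      cast (congrArg (S.O i.1)
        (show x i.1 = (extendInput S M' x i).1 by
          first
          | (unfold extendInput; split <;> first | rfl | contradiction)
          | simp [extendInput, h]))
        (a i.1)
    else Classical.arbitrary _

/-- The behaviour product `℘' ⊙ ℘'^⊥` of behaviours on the two halves `S' = S_{|M'}` and
`S'^⊥ = S_{|M'^⊥}` of a disjoint bipartition of `S`:
`(℘'⊙℘'^⊥)(a|x) = ℘'(a_{F_x}|x_{F_x}) · ℘'^⊥(a_{I∖F_x}|x_{I∖F_x})`, the factors being the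
corresponding marginals (well defined for no-signalling behaviours). -/
def bprod (S : Scenario) (M' : ∀ i, Set (S.M i))
    (p' : Behaviour (S.restrict M'))
    (p'' : Behaviour (S.restrict fun i => (M' i)ᶜ)) :
    Behaviour S :=
  fun x a =>
    marg (S.restrict M') p' (extendInput S M' x)
        {i : (S.restrict M').I | x i.1 ∈ M' i.1} (extendOutput S M' x a) *
    marg (S.restrict fun i => (M' i)ᶜ) p'' (extendInput S (fun i => (M' i)ᶜ) x)
        {i : (S.restrict fun i => (M' i)ᶜ).I | x i.1 ∈ (M' i.1)ᶜ}
        (extendOutput S (fun i => (M' i)ᶜ) x a)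

/-- The product `K' ⊙ K''` of two sets of behaviours on the halves of a bipartition. -/
def bprodSet (S : Scenario) (M' : ∀ i, Set (S.M i))
    (K' : Set (Behaviour (S.restrict M')))
    (K'' : Set (Behaviour (S.restrict fun i => (M' i)ᶜ))) :
    Set (Behaviour S) :=
  Set.image2 (bprod S M') K' K''

end

noncomputable section

/-- Marginals are affine in the behaviour. -/
lemma marg_comb (S : Scenario) (q r : Behaviour S) (t s : ℝ) (x : InputString S)
    (V : Set S.I) (a : OutputString S x) :
    marg S (t • q + s • r) x V a = t * marg S q x V a + s * marg S r x V a := by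
  unfold marg
  rw [Finset.mul_sum, Finset.mul_sum, ← Finset.sum_add_distrib]
  refine Finset.sum_congr rfl fun b _ => ?_
  by_cases hb : ∀ i ∈ V, b i = a i
  · rw [if_pos hb, if_pos hb, if_pos hb]; simp
  · rw [if_neg hb, if_neg hb, if_neg hb]; ring

lemma marg_nonneg (S : Scenario) (p : Behaviour S) (hp : IsBehaviour S p)
    (x : InputString S) (V : Set S.I) (a : OutputString S x) :
    0 ≤ marg S p x V a := by
  refine Finset.sum_nonneg fun b _ => ?_
  by_cases hb : ∀ i ∈ V, b i = a i
  · rw [if_pos hb]; exact hp.1 x b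
  · rw [if_neg hb]

lemma marg_le_one (S : Scenario) (p : Behaviour S) (hp : IsBehaviour S p)
    (x : InputString S) (V : Set S.I) (a : OutputString S x) :
    marg S p x V a ≤ 1 := by
  calc marg S p x V a ≤ ∑ b : OutputString S x, p x b := by
        refine Finset.sum_le_sum fun b _ => ?_
        by_cases hb : ∀ i ∈ V, b i = a i
        · rw [if_pos hb]
        · rw [if_neg hb]; exact hp.1 x b
    _ = 1 := hp.2 x

lemma NSset_convex (S : Scenario) : Convex ℝ (NSset S) := by
  rintro q ⟨hqB, hqNS⟩ r ⟨hrB, hrNS⟩ t s ht hs hts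
  refine ⟨⟨fun x a => ?_, fun x => ?_⟩, ?_⟩
  · have := hqB.1 x a; have := hrB.1 x a
    simp only [Pi.add_apply, Pi.smul_apply, smul_eq_mul]
    nlinarith
  · simp only [Pi.add_apply, Pi.smul_apply, smul_eq_mul]
    rw [Finset.sum_add_distrib, ← Finset.mul_sum, ← Finset.mul_sum, hqB.2 x, hrB.2 x]
    linarith
  · intro i x m a a' hj
    rw [marg_comb, marg_comb, hqNS i x m a a' hj, hrNS i x m a a' hj]

lemma PPNS_subset_NS (S : Scenario) (M' : ∀ i, Set (S.M i)) :
    PPNS S M' ⊆ NSset S := fun p hp => ⟨hp.1, hp.2.1⟩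

lemma PD_subset_NS (S : Scenario) (M' : ∀ i, Set (S.M i)) :
    PD S M' ⊆ NSset S :=
  convexHull_min (PPNS_subset_NS S M') (NSset_convex S)

/-- If `M''_i ⊆ M'_i ⊆ M_i` for all `i ∈ I`, then
`Ext(PD(S, M')) ⊆ Ext(PD(S, M''))`. -/
theorem ext_pd_mono (S : Scenario) [Nonempty S.I] (M' M'' : ∀ i, Set (S.M i))
    (h : ∀ i, M'' i ⊆ M' i) :
    Set.extremePoints ℝ (PD S M') ⊆ Set.extremePoints ℝ (PD S M'') := by
  intro p hp
  have hpPPNS : p ∈ PPNS S M' := extremePoints_convexHull_subset hp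
  obtain ⟨-, hpext⟩ := mem_extremePoints.mp hp
  have hFup : ∀ x : InputString S, Fup S M'' x ⊆ Fup S M' x :=
    fun x i hi => h i hi
  have hpPPNS'' : p ∈ PPNS S M'' :=
    ⟨hpPPNS.1, hpPPNS.2.1, fun x V hV a => hpPPNS.2.2 x V (hV.trans (hFup x)) a⟩
  refine mem_extremePoints.mpr ⟨subset_convexHull ℝ _ hpPPNS'', ?_⟩
  intro q hq r hr hseg
  obtain ⟨t, s, ht, hs, hts, hpe⟩ := hseg
  have hqNS : q ∈ NSset S := PD_subset_NS S M'' hq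
  have hrNS : r ∈ NSset S := PD_subset_NS S M'' hr
  -- q and r are partially predictable w.r.t. M'
  have key : ∀ (x : InputString S) (V : Set S.I), V ⊆ Fup S M' x →
      ∀ a, (marg S q x V a = 0 ∧ marg S r x V a = 0) ∨
           (marg S q x V a = 1 ∧ marg S r x V a = 1) := by
    intro x V hV a
    have hmp : marg S p x V a = t * marg S q x V a + s * marg S r x V a := by
      rw [← hpe, marg_comb]
    have hq0 := marg_nonneg S q hqNS.1 x V a
    have hr0 := marg_nonneg S r hrNS.1 x V a
    have hq1 := marg_le_one S q hqNS.1 x V a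
    have hr1 := marg_le_one S r hrNS.1 x V a
    rcases hpPPNS.2.2 x V hV a with h0 | h1
    · left
      constructor <;> nlinarith
    · right
      constructor <;> nlinarith
  have hqPP : q ∈ PPNS S M' :=
    ⟨hqNS.1, hqNS.2, fun x V hV a => ((key x V hV a).imp And.left And.left)⟩
  have hrPP : r ∈ PPNS S M' :=
    ⟨hrNS.1, hrNS.2, fun x V hV a => ((key x V hV a).imp And.right And.right)⟩
  exact hpext q (subset_convexHull ℝ _ hqPP) r (subset_convexHull ℝ _ hrPP)
    ⟨t, s, ht, hs, hts, hpe⟩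

end
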